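/- arXiv:2309.03086 — 5 statements merged into one kernel-verified Lean document; each statement's English description precedes it below -/
import Mathlib

section
/- Let x, y ∈ ℝⁿ with x ≠ 0 and y ≠ 0, and let Π_{span x} = (x/‖x‖)(x/‖x‖)ᵀ and Π_{span y} = (y/‖y‖)(y/‖y‖)ᵀ be the orthogonal projection matrices onto the lines spanned by x and y. Then ‖Π_{span x} − Π_{span y}‖ ≤ (2/‖x‖)·‖x − y‖, where ‖·‖ on the left is the Frobenius norm. -/
/-- Frobenius norm of a real square matrix. -/
noncomputable def frobNorm {n : ℕ} (M : Matrix (Fin n) (Fin n) ℝ) : ℝ :=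
  Real.sqrt (∑ i, ∑ j, (M i j) ^ 2)

/-- Outer product `x xᵀ` of a vector of `ℝⁿ` with itself. -/
noncomputable def outerProd {n : ℕ} (x : EuclideanSpace ℝ (Fin n)) :
    Matrix (Fin n) (Fin n) ℝ :=
  Matrix.of fun i j => x i * x j

/-- Orthogonal projection matrix `(x/‖x‖)(x/‖x‖)ᵀ` onto the line spanned by `x`. -/
noncomputable def lineProj {n : ℕ} (x : EuclideanSpace ℝ (Fin n)) :
    Matrix (Fin n) (Fin n) ℝ :=
  outerProd (‖x‖⁻¹ • x)

/-!
If `θ` is the angle between `x` and `y`, then `‖Π_{span x} - Π_{span y}‖² = 2 sin² θ`, while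
`‖x - y‖` is at least the distance `‖x‖ sin θ` from `x` to the line spanned by `y`. Hence
`‖Π_{span x} - Π_{span y}‖ ≤ √2 ‖x - y‖ / ‖x‖`, which is sharper than the claim.
-/

open scoped RealInnerProductSpace

lemma sq_frobNorm {n : ℕ} (M : Matrix (Fin n) (Fin n) ℝ) :
    frobNorm M ^ 2 = ∑ i, ∑ j, M i j ^ 2 :=
  Real.sq_sqrt (by positivity)

lemma real_inner_eq_sum {n : ℕ} (u v : EuclideanSpace ℝ (Fin n)) :
    ⟪u, v⟫ = ∑ i, u i * v i := by
  simp [PiLp.inner_apply, mul_comm]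

lemma sq_frobNorm_outerProd_sub {n : ℕ} (u v : EuclideanSpace ℝ (Fin n)) :
    frobNorm (outerProd u - outerProd v) ^ 2 = ‖u‖ ^ 4 - 2 * ⟪u, v⟫ ^ 2 + ‖v‖ ^ 4 := by
  have hu : ‖u‖ ^ 4 = (∑ i, u i * u i) ^ 2 := by
    rw [← real_inner_eq_sum, real_inner_self_eq_norm_sq]; ring
  have hv : ‖v‖ ^ 4 = (∑ i, v i * v i) ^ 2 := by
    rw [← real_inner_eq_sum, real_inner_self_eq_norm_sq]; ring
  rw [hu, hv, real_inner_eq_sum, sq_frobNorm, sq, sq, sq, Finset.sum_mul_sum,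
    Finset.sum_mul_sum, Finset.sum_mul_sum, Finset.mul_sum, ← Finset.sum_sub_distrib,
    ← Finset.sum_add_distrib]
  refine Finset.sum_congr rfl fun i _ => ?_
  rw [Finset.mul_sum, ← Finset.sum_sub_distrib, ← Finset.sum_add_distrib]
  refine Finset.sum_congr rfl fun j _ => ?_
  simp only [Matrix.sub_apply, outerProd, Matrix.of_apply]
  ring

lemma sq_frobNorm_lineProj_sub {n : ℕ} {x y : EuclideanSpace ℝ (Fin n)} (hx : x ≠ 0)
    (hy : y ≠ 0) :
    frobNorm (lineProj x - lineProj y) ^ 2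
      = 2 * (‖x‖ ^ 2 * ‖y‖ ^ 2 - ⟪x, y⟫ ^ 2) / (‖x‖ ^ 2 * ‖y‖ ^ 2) := by
  have hxu : ‖‖x‖⁻¹ • x‖ = 1 := by simpa using norm_smul_inv_norm (𝕜 := ℝ) hx
  have hyu : ‖‖y‖⁻¹ • y‖ = 1 := by simpa using norm_smul_inv_norm (𝕜 := ℝ) hy
  have hx' : ‖x‖ ≠ 0 := norm_ne_zero_iff.mpr hx
  have hy' : ‖y‖ ≠ 0 := norm_ne_zero_iff.mpr hy
  rw [lineProj, lineProj, sq_frobNorm_outerProd_sub, hxu, hyu, real_inner_smul_left,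
    real_inner_smul_right]
  field_simp
  ring

/-- The squared form of `‖y‖ ‖x‖ sin θ ≤ ‖y‖ ‖x - y‖`; the gap is `(⟪x, y⟫ - ‖y‖²)²`. -/
lemma sq_norm_mul_sq_norm_sub_sq_inner_le {n : ℕ} (x y : EuclideanSpace ℝ (Fin n)) :
    ‖x‖ ^ 2 * ‖y‖ ^ 2 - ⟪x, y⟫ ^ 2 ≤ ‖y‖ ^ 2 * ‖x - y‖ ^ 2 := by
  rw [norm_sub_sq_real]
  nlinarith [sq_nonneg (⟪x, y⟫ - ‖y‖ ^ 2)]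

lemma frobNorm_lineProj_sub_le {n : ℕ} {x y : EuclideanSpace ℝ (Fin n)} (hx : x ≠ 0)
    (hy : y ≠ 0) : frobNorm (lineProj x - lineProj y) ≤ √2 / ‖x‖ * ‖x - y‖ := by
  have hx' : 0 < ‖x‖ := norm_pos_iff.mpr hx
  have hy' : 0 < ‖y‖ := norm_pos_iff.mpr hy
  refine le_of_sq_le_sq ?_ (by positivity)
  rw [sq_frobNorm_lineProj_sub hx hy, div_le_iff₀ (by positivity)]
  calc 2 * (‖x‖ ^ 2 * ‖y‖ ^ 2 - ⟪x, y⟫ ^ 2) ≤ 2 * (‖y‖ ^ 2 * ‖x - y‖ ^ 2) := by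
        gcongr; exact sq_norm_mul_sq_norm_sub_sq_inner_le x y
    _ = (√2 / ‖x‖ * ‖x - y‖) ^ 2 * (‖x‖ ^ 2 * ‖y‖ ^ 2) := by
        field_simp; rw [Real.sq_sqrt zero_le_two]; ring

theorem stmt3 {n : ℕ} (x y : EuclideanSpace ℝ (Fin n)) (hx : x ≠ 0) (hy : y ≠ 0) :
    frobNorm (lineProj x - lineProj y) ≤ 2 / ‖x‖ * ‖x - y‖ := by
  refine (frobNorm_lineProj_sub_le hx hy).trans ?_
  gcongr
  exact Real.sqrt_le_iff.mpr ⟨zero_le_two, by norm_num⟩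
end

section
/- Let A and B be real symmetric n×n matrices, with A positive definite with smallest eigenvalue λ > 0, and suppose ‖A − B‖_op < λ, where ‖·‖_op is the operator norm. Then B is positive definite and ‖A^{-1/2} − B^{-1/2}‖_op ≤ ‖A − B‖_op^{1/2} · λ^{-1/2} · (λ − ‖A − B‖_op)^{-1/2}, where M^{-1/2} denotes the inverse of the unique symmetric positive-definite square root of a symmetric positive-definite matrix M. -/
/-- Operator norm of a real square matrix with respect to the Euclidean norm on `ℝⁿ`. -/
noncomputable def opNorm {n : ℕ} (M : Matrix (Fin n) (Fin n) ℝ) : ℝ :=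
  ‖LinearMap.toContinuousLinearMap (Matrix.toEuclideanLin M)‖

/-- The positive semidefinite square root of a positive semidefinite matrix
(the definition `Matrix.PosSemidef.sqrt` of the older Mathlib, since removed). -/
noncomputable def Matrix.PosSemidef.sqrt {𝕜 : Type*} [RCLike 𝕜] [PartialOrder 𝕜] [StarOrderedRing 𝕜]
    {m : Type*} [Fintype m]
    [DecidableEq m] {A : Matrix m m 𝕜} (hA : A.PosSemidef) : Matrix m m 𝕜 :=
  hA.1.eigenvectorUnitary.1 * Matrix.diagonal ((↑) ∘ Real.sqrt ∘ hA.1.eigenvalues) *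
  (star hA.1.eigenvectorUnitary : Matrix m m 𝕜)

/-! `A^{-1/2} - B^{-1/2} = A^{-1/2} (B^{1/2} - A^{1/2}) B^{-1/2}`, and the three factors are
bounded separately. Since `A - B ≤ ‖A - B‖`, we get `B ≥ λ - ‖A - B‖ > 0`, so `B` is positive
definite with `‖B^{-1/2}‖ ≤ (λ - ‖A - B‖)^{-1/2}`, just as `‖A^{-1/2}‖ ≤ λ^{-1/2}`. For the middle
factor, `‖S - R‖² ≤ ‖S² - R²‖` for positive semidefinite `S, R`: take a unit eigenvector `v` of
`S - R` whose eigenvalue `t` has `|t| = ‖S - R‖`. Writing `S² - R² = S (S - R) + (S - R) R` gives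
`⟪v, (S² - R²) v⟫ = t (⟪v, S v⟫ + ⟪v, R v⟫)`, and the bracket is at least
`|⟪v, S v⟫ - ⟪v, R v⟫| = |t|`. -/

open scoped Matrix.Norms.L2Operator MatrixOrder

namespace Matrix

section Hermitian

variable {𝕜 : Type*} [RCLike 𝕜] {m : Type*} [Fintype m] [DecidableEq m] {A : Matrix m m 𝕜}

lemma IsHermitian.l2_opNorm_cfc (hA : A.IsHermitian) (f : ℝ → ℝ) :
    ‖cfc f A‖ = ‖f ∘ hA.eigenvalues‖ := by
  rw [hA.cfc_eq, IsHermitian.cfc, Unitary.conjStarAlgAut_apply,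
    CStarRing.norm_mul_mem_unitary _ (Unitary.star_mem hA.eigenvectorUnitary.2),
    CStarRing.norm_mem_unitary_mul _ hA.eigenvectorUnitary.2, l2_opNorm_diagonal]
  simp [Pi.norm_def]

lemma IsHermitian.l2_opNorm_eq (hA : A.IsHermitian) : ‖A‖ = ‖hA.eigenvalues‖ := by
  have h := hA.l2_opNorm_cfc id
  rwa [cfc_id ℝ A] at h

lemma IsHermitian.exists_abs_eigenvalue_eq_l2_opNorm [Nonempty m] (hA : A.IsHermitian) :
    ∃ i, |hA.eigenvalues i| = ‖A‖ := by
  obtain ⟨i, -, hi⟩ :=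
    Finset.exists_mem_eq_sup' Finset.univ_nonempty fun i => ‖hA.eigenvalues i‖₊
  refine ⟨i, ?_⟩
  rw [hA.l2_opNorm_eq, Pi.norm_def, ← Finset.sup'_eq_sup Finset.univ_nonempty, hi]
  simp

lemma IsHermitian.le_algebraMap_l2_opNorm (hA : A.IsHermitian) : A ≤ algebraMap ℝ _ ‖A‖ := by
  rw [le_algebraMap_iff_spectrum_le hA.isSelfAdjoint, hA.spectrum_real_eq_range_eigenvalues]
  rintro _ ⟨i, rfl⟩
  rw [hA.l2_opNorm_eq]
  exact (le_abs_self _).trans (norm_le_pi_norm hA.eigenvalues i)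

lemma IsHermitian.algebraMap_le_iff_le_eigenvalues (hA : A.IsHermitian) {c : ℝ} :
    algebraMap ℝ _ c ≤ A ↔ ∀ i, c ≤ hA.eigenvalues i := by
  rw [algebraMap_le_iff_le_spectrum hA.isSelfAdjoint, hA.spectrum_real_eq_range_eigenvalues,
    Set.forall_mem_range]

end Hermitian

variable {m : Type*} [Fintype m] [DecidableEq m]

lemma abs_dotProduct_mulVec_self_le (M : Matrix m m ℝ) (x : m → ℝ) :
    |x ⬝ᵥ M *ᵥ x| ≤ ‖M‖ * (x ⬝ᵥ x) := by
  set y : EuclideanSpace ℝ m := WithLp.toLp 2 x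
  have hy : ‖y‖ ^ 2 = x ⬝ᵥ x := by
    rw [← real_inner_self_eq_norm_sq, EuclideanSpace.inner_eq_star_dotProduct, star_trivial]
  calc |x ⬝ᵥ M *ᵥ x| = |inner ℝ y (toEuclideanCLM (𝕜 := ℝ) M y)| := by
        rw [inner_toEuclideanCLM]
    _ ≤ ‖y‖ * ‖toEuclideanCLM (𝕜 := ℝ) M y‖ := abs_real_inner_le_norm _ _
    _ ≤ ‖y‖ * (‖M‖ * ‖y‖) := by gcongr; exact (toEuclideanCLM (𝕜 := ℝ) M).le_opNorm y
    _ = ‖M‖ * (x ⬝ᵥ x) := by rw [← hy]; ring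

namespace PosSemidef

variable {A : Matrix m m ℝ} (hA : A.PosSemidef)
include hA

lemma sqrt_eq_cfc : hA.sqrt = cfc Real.sqrt A := by
  rw [hA.1.cfc_eq]
  rfl

lemma sqrt_eq_cfcSqrt : hA.sqrt = CFC.sqrt A := by
  rw [CFC.sqrt_eq_real_sqrt A hA.nonneg, cfcₙ_eq_cfc, hA.sqrt_eq_cfc]

lemma posSemidef_sqrt : hA.sqrt.PosSemidef := by
  rw [hA.sqrt_eq_cfcSqrt]
  exact nonneg_iff_posSemidef.mp (CFC.sqrt_nonneg A)

lemma sqrt_mul_self : hA.sqrt * hA.sqrt = A := by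
  rw [hA.sqrt_eq_cfcSqrt, CFC.sqrt_mul_sqrt_self A hA.nonneg]

lemma isUnit_sqrt (hu : IsUnit A) : IsUnit hA.sqrt :=
  isUnit_of_mul_isUnit_left (hA.sqrt_mul_self ▸ hu)

lemma l2_opNorm_sqrt_inv_le {c : ℝ} (hc : 0 < c) (hcA : ∀ i, c ≤ hA.1.eigenvalues i) :
    ‖hA.sqrt⁻¹‖ ≤ (√c)⁻¹ := by
  have hne : ∀ x ∈ spectrum ℝ A, √x ≠ 0 := by
    rw [hA.1.spectrum_real_eq_range_eigenvalues]
    rintro _ ⟨i, rfl⟩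
    exact (Real.sqrt_pos.2 (hc.trans_le (hcA i))).ne'
  rw [hA.sqrt_eq_cfc, nonsing_inv_eq_ringInverse, ← cfc_inv _ _ hne, hA.1.l2_opNorm_cfc,
    pi_norm_le_iff_of_nonneg (by positivity)]
  intro i
  have hci := hcA i
  simp only [Function.comp_apply, Real.norm_eq_abs]
  rw [abs_of_nonneg (by positivity)]
  gcongr

end PosSemidef

lemma PosSemidef.l2_opNorm_sub_sq_le {S R : Matrix m m ℝ} (hS : S.PosSemidef) (hR : R.PosSemidef) :
    ‖S - R‖ ^ 2 ≤ ‖S * S - R * R‖ := by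
  rcases isEmpty_or_nonempty m with _ | _
  · simp [Subsingleton.elim (S - R) 0]
  have hD : (S - R).IsHermitian := hS.1.sub hR.1
  obtain ⟨i, hi⟩ := hD.exists_abs_eigenvalue_eq_l2_opNorm
  set v := (hD.eigenvectorBasis i).ofLp
  set t := hD.eigenvalues i
  have hDv : (S - R) *ᵥ v = t • v := hD.mulVec_eigenvectorBasis i
  have hvD : v ᵥ* (S - R) = t • v := by
    rw [← mulVec_transpose, ← conjTranspose_eq_transpose_of_trivial, hD.eq, hDv]
  have hvv : v ⬝ᵥ v = 1 := by
    have h := real_inner_self_eq_norm_sq (hD.eigenvectorBasis i)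
    rwa [EuclideanSpace.inner_eq_star_dotProduct, hD.eigenvectorBasis.orthonormal.1 i, star_trivial,
      one_pow] at h
  have ha : 0 ≤ v ⬝ᵥ S *ᵥ v := by simpa using hS.dotProduct_mulVec_nonneg v
  have hb : 0 ≤ v ⬝ᵥ R *ᵥ v := by simpa using hR.dotProduct_mulVec_nonneg v
  have ht : t = v ⬝ᵥ S *ᵥ v - v ⬝ᵥ R *ᵥ v := by
    rw [← dotProduct_sub, ← sub_mulVec, hDv, dotProduct_smul, hvv, smul_eq_mul, mul_one]
  have hquad : v ⬝ᵥ (S * S - R * R) *ᵥ v = t * (v ⬝ᵥ S *ᵥ v + v ⬝ᵥ R *ᵥ v) := by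
    have : S * S - R * R = S * (S - R) + (S - R) * R := by noncomm_ring
    rw [this, add_mulVec, dotProduct_add, ← mulVec_mulVec, ← mulVec_mulVec, hDv, mulVec_smul,
      dotProduct_smul, dotProduct_mulVec v (S - R), hvD, smul_dotProduct]
    simp only [smul_eq_mul]
    ring
  calc ‖S - R‖ ^ 2 = |t| * |t| := by rw [← hi, sq]
    _ ≤ |t| * (v ⬝ᵥ S *ᵥ v + v ⬝ᵥ R *ᵥ v) := by
        gcongr
        rw [ht]
        exact abs_sub_le_of_nonneg_of_le ha (by linarith) hb (by linarith)
    _ = |v ⬝ᵥ (S * S - R * R) *ᵥ v| := by rw [hquad, abs_mul, abs_of_nonneg (add_nonneg ha hb)]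
    _ ≤ ‖S * S - R * R‖ := by simpa [hvv] using abs_dotProduct_mulVec_self_le (S * S - R * R) v

lemma PosSemidef.l2_opNorm_sqrt_sub_sqrt_le {A B : Matrix m m ℝ} (hA : A.PosSemidef)
    (hB : B.PosSemidef) : ‖hA.sqrt - hB.sqrt‖ ≤ √‖A - B‖ := by
  refine Real.le_sqrt_of_sq_le ?_
  simpa only [hA.sqrt_mul_self, hB.sqrt_mul_self] using
    hA.posSemidef_sqrt.l2_opNorm_sub_sq_le hB.posSemidef_sqrt

end Matrix

lemma opNorm_eq_l2_opNorm {n : ℕ} (M : Matrix (Fin n) (Fin n) ℝ) : opNorm M = ‖M‖ := rfl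

theorem stmt5 {n : ℕ} (A B : Matrix (Fin n) (Fin n) ℝ)
    (hApd : A.PosDef) (hBsymm : B.IsHermitian)
    (lam : ℝ) (hlam : IsLeast (Set.range hApd.isHermitian.eigenvalues) lam)
    (hlampos : 0 < lam) (hAB : opNorm (A - B) < lam) :
    B.PosDef ∧ ∀ hBpsd : B.PosSemidef,
      opNorm (hApd.posSemidef.sqrt⁻¹ - hBpsd.sqrt⁻¹) ≤
        Real.sqrt (opNorm (A - B)) * (Real.sqrt lam)⁻¹ *
          (Real.sqrt (lam - opNorm (A - B)))⁻¹ := by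
  simp only [opNorm_eq_l2_opNorm] at hAB ⊢
  have hAeig : ∀ i, lam ≤ hApd.1.eigenvalues i := fun i => hlam.2 ⟨i, rfl⟩
  have hAlow := hApd.1.algebraMap_le_iff_le_eigenvalues.2 hAeig
  have hBlow : algebraMap ℝ _ (lam - ‖A - B‖) ≤ B := by
    have h := sub_le_sub hAlow (hApd.1.sub hBsymm).le_algebraMap_l2_opNorm
    rwa [sub_sub_cancel, ← map_sub] at h
  have hBeig := hBsymm.algebraMap_le_iff_le_eigenvalues.1 hBlow
  have hBpd : B.PosDef :=
    hBsymm.posDef_iff_eigenvalues_pos.2 fun i => (sub_pos.2 hAB).trans_le (hBeig i)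
  refine ⟨hBpd, fun hBpsd => ?_⟩
  have hSA := hApd.posSemidef.isUnit_sqrt hApd.isUnit
  have hSB := hBpsd.isUnit_sqrt hBpd.isUnit
  calc ‖hApd.posSemidef.sqrt⁻¹ - hBpsd.sqrt⁻¹‖
      = ‖hApd.posSemidef.sqrt⁻¹ * (hBpsd.sqrt - hApd.posSemidef.sqrt) * hBpsd.sqrt⁻¹‖ := by
        rw [Matrix.inv_sub_inv (iff_of_true hSA hSB)]
    _ ≤ ‖hApd.posSemidef.sqrt⁻¹‖ * ‖hBpsd.sqrt - hApd.posSemidef.sqrt‖ * ‖hBpsd.sqrt⁻¹‖ :=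
        norm_mul₃_le
    _ ≤ (√lam)⁻¹ * √‖A - B‖ * (√(lam - ‖A - B‖))⁻¹ := by
        gcongr
        · exact hApd.posSemidef.l2_opNorm_sqrt_inv_le hlampos hAeig
        · rw [norm_sub_rev]
          exact hApd.posSemidef.l2_opNorm_sqrt_sub_sqrt_le hBpsd
        · exact hBpsd.l2_opNorm_sqrt_inv_le (sub_pos.2 hAB) hBeig
    _ = √‖A - B‖ * (√lam)⁻¹ * (√(lam - ‖A - B‖))⁻¹ := by ring
end

section
/- Let 𝒪 ⊂ ℝⁿ be a nonempty compact set and δ = sup_{y ∈ 𝒪} ‖y‖. Let ĥ be a set of skew-symmetric real n×n matrices and β ≥ 0 such that for every A ∈ ĥ there exist an orthogonal matrix Q and B = Q A Qᵀ with ‖A − B‖ ≤ β (Frobenius norm) and exp(tB)·𝒪 = 𝒪 for all t ∈ ℝ. Then for every x ∈ ℝⁿ and every A ∈ ĥ, dist(exp(A)x, 𝒪) ≤ (β + 1)·dist(x, 𝒪) + β δ, where dist denotes the Euclidean distance from a point to a set. In particular the one-sided Hausdorff distance from the set {exp(A)x : A ∈ ĥ} to 𝒪 is at most (β+1)·dist(x,𝒪)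 + βδ. -/
/-!
Write `B = Q A Qᵀ`. Since `B` is skew-symmetric and `exp B` maps `O` onto itself, the isometry
`exp B` does not move distances to `O`, so
`dist(exp A x, O) ≤ dist(x, O) + ‖(exp A - exp B) x‖ ≤ dist(x, O) + ‖A - B‖ ‖x‖`,
using that the exponential is 1-Lipschitz on skew-adjoint operators (Duhamel's formula).
Finally `‖A - B‖ ≤ β` because the operator norm is dominated by the Frobenius norm, and
`‖x‖ ≤ dist(x, O) + δ`.
-/

open Matrix

open NormedSpace Metric

section SkewAdjointExp

variable {𝔸 : Type*} [NormedRing 𝔸] [NormedAlgebra ℝ 𝔸] [CompleteSpace 𝔸] [StarRing 𝔸]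
  [CStarRing 𝔸] [StarModule ℝ 𝔸]

lemma exp_smul_mem_unitary_of_mem_skewAdjoint {a : 𝔸} (ha : a ∈ skewAdjoint 𝔸) (t : ℝ) :
    exp (t • a) ∈ unitary 𝔸 :=
  let _ : NormedAlgebra ℚ 𝔸 := .restrictScalars ℚ ℝ 𝔸
  exp_mem_unitary_of_mem_skewAdjoint (skewAdjoint.smul_mem t ha)

/-- `s ↦ exp (s a) exp ((1 - s) b)` joins `exp b` to `exp a` with derivative
`exp (s a) (a - b) exp ((1 - s) b)`, whose unitary factors do not change the norm. -/
theorem norm_exp_sub_exp_le_of_mem_skewAdjoint {a b : 𝔸} (ha : a ∈ skewAdjoint 𝔸)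
    (hb : b ∈ skewAdjoint 𝔸) : ‖exp a - exp b‖ ≤ ‖a - b‖ := by
  let f : ℝ → 𝔸 := fun s => exp (s • a) * exp ((1 - s) • b)
  have hderiv : ∀ s : ℝ, HasDerivAt f (exp (s • a) * (a - b) * exp ((1 - s) • b)) s := by
    intro s
    have hb' := (hasDerivAt_exp_smul_const' (𝕂 := ℝ) b (1 - s)).scomp s
      ((hasDerivAt_id s).const_sub 1)
    refine ((hasDerivAt_exp_smul_const (𝕂 := ℝ) a s).mul hb').congr_deriv ?_
    simp only [Function.comp_apply, neg_one_smul]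
    noncomm_ring
  have hbound : ∀ s : ℝ, ‖exp (s • a) * (a - b) * exp ((1 - s) • b)‖ ≤ ‖a - b‖ := fun s => by
    rw [CStarRing.norm_mul_mem_unitary _ (exp_smul_mem_unitary_of_mem_skewAdjoint hb _),
      CStarRing.norm_mem_unitary_mul _ (exp_smul_mem_unitary_of_mem_skewAdjoint ha _)]
  simpa [f] using norm_image_sub_le_of_norm_deriv_le_segment_01'
    (fun s _ => (hderiv s).hasDerivWithinAt) (fun s _ => hbound s)

end SkewAdjointExp

lemma norm_le_infDist_add {E : Type*} [SeminormedAddCommGroup E] {s : Set E} (hs : s.Nonempty)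
    {δ : ℝ} (hδ : ∀ y ∈ s, ‖y‖ ≤ δ) (x : E) : ‖x‖ ≤ infDist x s + δ := by
  rw [← sub_le_iff_le_add, le_infDist hs]
  intro y hy
  rw [dist_eq_norm]
  linarith [norm_le_norm_sub_add x y, hδ y hy]

lemma infDist_le_infDist_add_dist_of_isometry {α : Type*} [PseudoMetricSpace α] {Φ : α → α}
    (hΦ : Isometry Φ) {s : Set α} (hs : Φ '' s = s) (x z : α) :
    infDist z s ≤ infDist x s + dist z (Φ x) :=
  calc infDist z s ≤ infDist (Φ x) s + dist z (Φ x) := infDist_le_infDist_add_dist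
    _ = infDist x s + dist z (Φ x) := by
      conv_lhs => rw [← hs]
      rw [infDist_image hΦ]

lemma infDist_exp_apply_le {E : Type*} [NormedAddCommGroup E] [InnerProductSpace ℝ E]
    [CompleteSpace E] {a b : E →L[ℝ] E} (ha : a ∈ skewAdjoint (E →L[ℝ] E))
    (hb : b ∈ skewAdjoint (E →L[ℝ] E)) {s : Set E} (hs : (exp b : E →L[ℝ] E) '' s = s) (x : E) :
    infDist ((exp a : E →L[ℝ] E) x) s ≤ infDist x s + ‖a - b‖ * ‖x‖ := by
  have hisom : Isometry (exp b : E →L[ℝ] E) :=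
    let _ : NormedAlgebra ℚ (E →L[ℝ] E) := .restrictScalars ℚ ℝ _
    AddMonoidHomClass.isometry_of_norm _
      (ContinuousLinearMap.norm_map_of_mem_unitary (exp_mem_unitary_of_mem_skewAdjoint hb))
  calc infDist ((exp a : E →L[ℝ] E) x) s ≤ infDist x s + ‖(exp a - exp b : E →L[ℝ] E) x‖ := by
        simpa [dist_eq_norm] using
          infDist_le_infDist_add_dist_of_isometry hisom hs x ((exp a : E →L[ℝ] E) x)
    _ ≤ infDist x s + ‖a - b‖ * ‖x‖ := by
      gcongr
      exact ((exp a - exp b).le_opNorm x).trans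
        (by gcongr; exact norm_exp_sub_exp_le_of_mem_skewAdjoint ha hb)

lemma norm_toEuclideanCLM_le_frobNorm {n : ℕ} (M : Matrix (Fin n) (Fin n) ℝ) :
    ‖toEuclideanCLM (𝕜 := ℝ) M‖ ≤ frobNorm M := by
  refine ContinuousLinearMap.opNorm_le_bound _ (Real.sqrt_nonneg _) fun x => ?_
  rw [EuclideanSpace.norm_eq, EuclideanSpace.norm_eq, frobNorm, ← Real.sqrt_mul (by positivity)]
  refine Real.sqrt_le_sqrt ?_
  have happ : ∀ i, toEuclideanCLM (𝕜 := ℝ) M x i = ∑ j, M i j * x j := fun i => rfl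
  simp only [happ, Real.norm_eq_abs, sq_abs]
  rw [Finset.sum_mul]
  exact Finset.sum_le_sum fun i _ => Finset.sum_mul_sq_le_sq_mul_sq _ _ _

section EuclideanMatrix

variable {n : Type*} [Fintype n] [DecidableEq n]

lemma toEuclideanCLM_exp (M : Matrix n n ℝ) :
    toEuclideanCLM (𝕜 := ℝ) (exp M) = exp (toEuclideanCLM (𝕜 := ℝ) M) :=
  -- `map_exp` needs a Banach algebra structure on matrices; `exp` only sees its topology.
  let _ : NormedRing (Matrix n n ℝ) := Matrix.linftyOpNormedRing
  let _ : NormedAlgebra ℝ (Matrix n n ℝ) := Matrix.linftyOpNormedAlgebra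
  let _ : NormedAlgebra ℚ (Matrix n n ℝ) := .restrictScalars ℚ ℝ _
  map_exp (toEuclideanCLM (𝕜 := ℝ) (n := n)).toRingEquiv
    (LinearMap.continuous_of_finiteDimensional
      (toEuclideanCLM (𝕜 := ℝ) (n := n)).toAlgEquiv.toLinearEquiv.toLinearMap) M

lemma toEuclideanCLM_mem_skewAdjoint {M : Matrix n n ℝ} (hM : Mᵀ = -M) :
    toEuclideanCLM (𝕜 := ℝ) M ∈ skewAdjoint _ := by
  rw [skewAdjoint.mem_iff, ← map_star, star_eq_conjTranspose,
    conjTranspose_eq_transpose_of_trivial, hM, map_neg]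

end EuclideanMatrix

theorem stmt9_general {n : ℕ} (O : Set (EuclideanSpace ℝ (Fin n)))
    (hOne : O.Nonempty)
    (δ : ℝ) (hδ : IsLUB ((fun y => ‖y‖) '' O) δ)
    (h : Set (Matrix (Fin n) (Fin n) ℝ)) (β : ℝ)
    (hskew : ∀ A ∈ h, Aᵀ = -A)
    (hmain : ∀ A ∈ h, ∃ Q : Matrix (Fin n) (Fin n) ℝ, Qᵀ * Q = 1 ∧
      frobNorm (A - Q * A * Qᵀ) ≤ β ∧
      ∀ t : ℝ,
        (⇑(Matrix.toEuclideanLin (NormedSpace.exp (t • (Q * A * Qᵀ))))) '' O = O) :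
    ∀ x : EuclideanSpace ℝ (Fin n), ∀ A ∈ h,
      Metric.infDist (Matrix.toEuclideanLin (NormedSpace.exp A) x) O ≤
        (β + 1) * Metric.infDist x O + β * δ := by
  intro x A hA
  obtain ⟨Q, -, hfrob, hinv⟩ := hmain A hA
  set B := Q * A * Qᵀ
  have hBskew : Bᵀ = -B := by simp [B, transpose_mul, hskew A hA, Matrix.mul_assoc]
  have hinv₁ : (exp (toEuclideanCLM (𝕜 := ℝ) B) : EuclideanSpace ℝ (Fin n) →L[ℝ] _) '' O = O := by
    rw [← toEuclideanCLM_exp, ← one_smul ℝ B]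
    exact hinv 1
  have hAB : ‖toEuclideanCLM (𝕜 := ℝ) A - toEuclideanCLM (𝕜 := ℝ) B‖ ≤ β := by
    rw [← map_sub]
    exact (norm_toEuclideanCLM_le_frobNorm _).trans hfrob
  have hx : ‖x‖ ≤ infDist x O + δ :=
    norm_le_infDist_add hOne (fun y hy => hδ.1 ⟨y, hy, rfl⟩) x
  have key := infDist_exp_apply_le (toEuclideanCLM_mem_skewAdjoint (hskew A hA))
    (toEuclideanCLM_mem_skewAdjoint hBskew) hinv₁ x
  rw [← toEuclideanCLM_exp] at key
  calc infDist (toEuclideanLin (exp A) x) O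
      ≤ infDist x O + ‖toEuclideanCLM (𝕜 := ℝ) A - toEuclideanCLM (𝕜 := ℝ) B‖ * ‖x‖ := key
    _ ≤ infDist x O + β * (infDist x O + δ) := by
      gcongr
      exact (norm_nonneg _).trans hAB
    _ = (β + 1) * infDist x O + β * δ := by ring

theorem stmt9 {n : ℕ} (O : Set (EuclideanSpace ℝ (Fin n)))
    (hOne : O.Nonempty) (hOcpt : IsCompact O)
    (δ : ℝ) (hδ : IsLUB ((fun y => ‖y‖) '' O) δ)
    (h : Set (Matrix (Fin n) (Fin n) ℝ)) (β : ℝ) (hβ : 0 ≤ β)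
    (hskew : ∀ A ∈ h, Aᵀ = -A)
    (hmain : ∀ A ∈ h, ∃ Q : Matrix (Fin n) (Fin n) ℝ, Qᵀ * Q = 1 ∧
      frobNorm (A - Q * A * Qᵀ) ≤ β ∧
      ∀ t : ℝ,
        (⇑(Matrix.toEuclideanLin (NormedSpace.exp (t • (Q * A * Qᵀ))))) '' O = O) :
    ∀ x : EuclideanSpace ℝ (Fin n), ∀ A ∈ h,
      Metric.infDist (Matrix.toEuclideanLin (NormedSpace.exp A) x) O ≤
        (β + 1) * Metric.infDist x O + β * δ :=
  stmt9_general O hOne δ hδ h β hskew hmain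
end

section
/- Let d ≥ 1, n = 2d, p ≥ 1, and let ω ∈ ℤ^d satisfy: p does not divide 2ω_i for any i, and for all i ≠ j, p divides neither ω_i − ω_j nor ω_i + ω_j. Let x ∈ ℝⁿ and, for m = 0,…,p−1, let x_m ∈ ℝⁿ be the vector whose (2i−1)-st and 2i-th coordinates are cos(2πmω_i/p)·x_{2i−1} − sin(2πmω_i/p)·x_{2i} and sin(2πmω_i/p)·x_{2i−1} + cos(2πmω_i/p)·x_{2i}, i.e., x_m is obtained from x by applying the block-diagonal rotation diag(R(2πmω_1/p),…,R(2πmω_d/p)). Then the empirical covariance matrix (1/p)·Σ_{m=0}^{p−1} x_m x_mᵀ equals the diagonal matrix (1/2)·diag(x_1²+x_2², x_1²+x_2², …, x_{2d−1}²+x_{2d}², x_{2d−1}²+x_{2d}²), in which each value (x_{2i−1}²+x_{2i}²)/2 appears twice, in positions 2i−1 and 2i. -/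
/-!
The character sum `∑_{m<p} exp(2πimk/p)` equals `p` when `p ∣ k` and `0` otherwise, so the
sine sums always vanish. By the product-to-sum formulas, the `((i,a),(j,b))` entry of
`∑_m x_m x_mᵀ` is a combination of the cosine sums at `k = ω_i - ω_j` and `k = ω_i + ω_j`. The
hypotheses on `ω` make all of them vanish except the one at `k = 0` on the diagonal blocks, where
the block becomes `p/2 · (x xᵀ + Jx (Jx)ᵀ)` with `J` the quarter turn, i.e.
`p/2 · (x_{2i-1}² + x_{2i}²) I₂`.
-/

/-- The vector obtained from `x ∈ ℝ^{2d}` (with coordinates indexed by `Fin d × Fin 2`)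
by applying the block-diagonal rotation `diag(R(2πmω₁/p),…,R(2πmω_d/p))`. -/
noncomputable def rotatedVec {d : ℕ} (ω : Fin d → ℤ) (p : ℕ)
    (x : Fin d × Fin 2 → ℝ) (m : ℕ) : Fin d × Fin 2 → ℝ :=
  fun q =>
    if q.2 = 0 then
      Real.cos (2 * Real.pi * (m : ℝ) * ((ω q.1 : ℤ) : ℝ) / (p : ℝ)) * x (q.1, 0) -
        Real.sin (2 * Real.pi * (m : ℝ) * ((ω q.1 : ℤ) : ℝ) / (p : ℝ)) * x (q.1, 1)
    else
      Real.sin (2 * Real.pi * (m : ℝ) * ((ω q.1 : ℤ) : ℝ) / (p : ℝ)) * x (q.1, 0) +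
        Real.cos (2 * Real.pi * (m : ℝ) * ((ω q.1 : ℤ) : ℝ) / (p : ℝ)) * x (q.1, 1)

open Real Finset

lemma sum_range_cexp_eq_ite (p : ℕ) (k : ℤ) :
    ∑ m ∈ range p, Complex.exp (2 * π * Complex.I * m * k / p) =
      if (p : ℤ) ∣ k then (p : ℂ) else 0 := by
  rcases Nat.eq_zero_or_pos p with rfl | hp
  · simp
  have hζ := Complex.isPrimitiveRoot_exp p hp.ne'
  set ζ := Complex.exp (2 * π * Complex.I / p)
  have hterm : ∀ m : ℕ, Complex.exp (2 * π * Complex.I * m * k / p) = (ζ ^ k) ^ m := by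
    intro m
    rw [← Complex.exp_int_mul, ← Complex.exp_nat_mul]
    ring_nf
  simp_rw [hterm]
  split_ifs with hk
  · simp [(hζ.zpow_eq_one_iff_dvd k).2 hk]
  · have hζk_pow : (ζ ^ k) ^ p = 1 := by
      rw [← zpow_natCast, ← zpow_mul, mul_comm, zpow_mul, zpow_natCast, hζ.pow_eq_one, one_zpow]
    rw [geom_sum_eq ((hζ.zpow_eq_one_iff_dvd k).not.2 hk), hζk_pow, sub_self, zero_div]

lemma cexp_angle_eq_cexp_ofReal_mul_I (p m : ℕ) (k : ℤ) :
    Complex.exp (2 * π * Complex.I * m * k / p) =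
      Complex.exp ((2 * π * m * k / p : ℝ) * Complex.I) := by
  push_cast; ring_nf

lemma sum_range_cos_eq_ite (p : ℕ) (k : ℤ) :
    ∑ m ∈ range p, cos (2 * π * m * k / p) = if (p : ℤ) ∣ k then (p : ℝ) else 0 := by
  have h := congrArg Complex.re (sum_range_cexp_eq_ite p k)
  simp only [Complex.re_sum, cexp_angle_eq_cexp_ofReal_mul_I, Complex.exp_ofReal_mul_I_re] at h
  rw [h]; split_ifs <;> simp

lemma sum_range_sin_eq_zero (p : ℕ) (k : ℤ) :
    ∑ m ∈ range p, sin (2 * π * m * k / p) = 0 := by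
  have h := congrArg Complex.im (sum_range_cexp_eq_ite p k)
  simp only [Complex.im_sum, cexp_angle_eq_cexp_ofReal_mul_I, Complex.exp_ofReal_mul_I_im] at h
  rw [h]; split_ifs <;> simp

lemma cos_mul_add_sin_mul_mul (α β u u' v v' : ℝ) :
    (cos α * u + sin α * u') * (cos β * v + sin β * v') =
      (cos (α - β) * (u * v + u' * v') + cos (α + β) * (u * v - u' * v') +
        sin (α + β) * (u * v' + u' * v) + sin (α - β) * (u' * v - u * v')) / 2 := by
  rw [cos_sub, cos_add, sin_add, sin_sub]
  ring

-- Multiplication by `i` on each block `ℝ² ≅ ℂ`.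
def quarterTurn {d : ℕ} (x : Fin d × Fin 2 → ℝ) : Fin d × Fin 2 → ℝ :=
  fun q => if q.2 = 0 then -x (q.1, 1) else x (q.1, 0)

lemma rotatedVec_apply {d : ℕ} (ω : Fin d → ℤ) (p : ℕ) (x : Fin d × Fin 2 → ℝ) (m : ℕ)
    (q : Fin d × Fin 2) :
    rotatedVec ω p x m q =
      cos (2 * π * m * ω q.1 / p) * x q + sin (2 * π * m * ω q.1 / p) * quarterTurn x q := by
  obtain ⟨i, a⟩ := q
  fin_cases a <;> simp [rotatedVec, quarterTurn] <;> ring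

lemma mul_add_quarterTurn_mul {d : ℕ} (x : Fin d × Fin 2 → ℝ) (i : Fin d) (a b : Fin 2) :
    x (i, a) * x (i, b) + quarterTurn x (i, a) * quarterTurn x (i, b) =
      if a = b then x (i, 0) ^ 2 + x (i, 1) ^ 2 else 0 := by
  fin_cases a <;> fin_cases b <;> simp [quarterTurn] <;> ring

lemma sum_rotatedVec_mul_rotatedVec {d : ℕ} (ω : Fin d → ℤ) (p : ℕ) (x : Fin d × Fin 2 → ℝ)
    (q r : Fin d × Fin 2) :
    ∑ m ∈ range p, rotatedVec ω p x m q * rotatedVec ω p x m r =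
      ((if (p : ℤ) ∣ ω q.1 - ω r.1 then (p : ℝ) else 0) *
          (x q * x r + quarterTurn x q * quarterTurn x r) +
        (if (p : ℤ) ∣ ω q.1 + ω r.1 then (p : ℝ) else 0) *
          (x q * x r - quarterTurn x q * quarterTurn x r)) / 2 := by
  have angle_sub (m : ℕ) : 2 * π * m * ω q.1 / p - 2 * π * m * ω r.1 / p =
      2 * π * m * ((ω q.1 - ω r.1 : ℤ) : ℝ) / p := by push_cast; ring
  have angle_add (m : ℕ) : 2 * π * m * ω q.1 / p + 2 * π * m * ω r.1 / p =
      2 * π * m * ((ω q.1 + ω r.1 : ℤ) : ℝ) / p := by push_cast; ring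
  simp only [rotatedVec_apply, cos_mul_add_sin_mul_mul, angle_sub, angle_add, ← sum_div,
    sum_add_distrib, ← sum_mul, sum_range_cos_eq_ite, sum_range_sin_eq_zero, zero_mul, add_zero]

theorem stmt12_general {d : ℕ} (p : ℕ) (hp : 1 ≤ p) (ω : Fin d → ℤ)
    (hω1 : ∀ i, ¬ ((p : ℤ) ∣ 2 * ω i))
    (hω2 : ∀ i j, i ≠ j → ¬ ((p : ℤ) ∣ ω i - ω j))
    (hω3 : ∀ i j, i ≠ j → ¬ ((p : ℤ) ∣ ω i + ω j))
    (x : Fin d × Fin 2 → ℝ) :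
    ((p : ℝ))⁻¹ • ∑ m ∈ Finset.range p,
        Matrix.vecMulVec (rotatedVec ω p x m) (rotatedVec ω p x m) =
      Matrix.diagonal (fun q : Fin d × Fin 2 =>
        (x (q.1, 0) ^ 2 + x (q.1, 1) ^ 2) / 2) := by
  have hp0 : (p : ℝ) ≠ 0 := by positivity
  ext ⟨i, a⟩ ⟨j, b⟩
  simp only [Matrix.smul_apply, Matrix.sum_apply, Matrix.vecMulVec_apply, smul_eq_mul,
    Matrix.diagonal_apply, sum_rotatedVec_mul_rotatedVec]
  by_cases hij : i = j
  · subst hij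
    rw [sub_self, if_pos (dvd_zero _), ← two_mul, if_neg (hω1 i), mul_add_quarterTurn_mul,
      zero_mul, add_zero, ← mul_div_assoc, inv_mul_cancel_left₀ hp0]
    simp [ite_div]
  · rw [if_neg (hω2 i j hij), if_neg (hω3 i j hij)]
    simp [hij]

theorem stmt12 {d : ℕ} (hd : 1 ≤ d) (p : ℕ) (hp : 1 ≤ p) (ω : Fin d → ℤ)
    (hω1 : ∀ i, ¬ ((p : ℤ) ∣ 2 * ω i))
    (hω2 : ∀ i j, i ≠ j → ¬ ((p : ℤ) ∣ ω i - ω j))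
    (hω3 : ∀ i j, i ≠ j → ¬ ((p : ℤ) ∣ ω i + ω j))
    (x : Fin d × Fin 2 → ℝ) :
    ((p : ℝ))⁻¹ • ∑ m ∈ Finset.range p,
        Matrix.vecMulVec (rotatedVec ω p x m) (rotatedVec ω p x m) =
      Matrix.diagonal (fun q : Fin d × Fin 2 =>
        (x (q.1, 0) ^ 2 + x (q.1, 1) ^ 2) / 2) :=
  stmt12_general p hp ω hω1 hω2 hω3 x
end

section
/- Let ℳ ⊂ ℝⁿ be a nonempty compact C² embedded submanifold (without boundary), and for x ∈ ℳ let T_xℳ ⊂ ℝⁿ denote its tangent space at x, viewed as a linear subspace of ℝⁿ. Then for every real n×n matrix A, the following are equivalent: (i) exp(tA)·ℳ = ℳ for every t ∈ ℝ; (ii) A x ∈ T_xℳ for every x ∈ ℳ. That is, the Lie algebra of the symmetry group Sym(ℳ) = {P ∈ GLₙ(ℝ) : P·ℳ = ℳ} equals {A ∈ Mₙ(ℝ) : ∀x ∈ ℳ, Ax ∈ T_xℳ}. -/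
/-!
Write `L` for the linear map of `A` and `φₜ = exp (t L)`.

If every `L x` is tangent to `ℳ`, the distance `f t = infDist (φₜ y) ℳ` of an orbit starting in `ℳ`
has upper right Dini derivative at most `‖L‖ f t`: compare `φₜ y` with a curve in `ℳ` through a
nearest point `x`, whose velocity `L x` differs from that of the orbit by at most `‖L‖ f t`.
Grönwall's inequality and `f 0 = 0` give `f ≡ 0` forward in time, and `-L` handles backward time.

Conversely, if `ℳ` is invariant then `t ↦ φₜ x` is a curve in `ℳ` with velocity `L x`. Read
through a chart as `g ∘ q` with `g` a parametrisation, injectivity of `Dg` gives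
`q h - q 0 = O(h)`, so `L x` is a limit of the vectors `Dg ((q h - q 0) / h)` of the closed
subspace `range Dg`.
-/

open scoped Manifold Topology NNReal
open Filter Asymptotics Set Metric NormedSpace

section Immersion
variable {𝕜 : Type*} [NontriviallyNormedField 𝕜]
  {E F : Type*} [NormedAddCommGroup E] [NormedSpace 𝕜 E] [NormedAddCommGroup F] [NormedSpace 𝕜 F]

theorem HasFDerivAt.mem_range_of_hasDerivAt_comp [CompleteSpace 𝕜] [FiniteDimensional 𝕜 F]
    {g : F → E} {g' : F →L[𝕜] E} {q : 𝕜 → F} {v : E} (hg : HasFDerivAt g g' (q 0))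
    (hinj : Function.Injective g') (hq : ContinuousAt q 0) (hgq : HasDerivAt (g ∘ q) v 0) : v ∈ Set.range g' := by
  obtain ⟨C, -, hC⟩ :=
    (g' : F →ₗ[𝕜] E).exists_antilipschitzWith (LinearMap.ker_eq_bot.mpr hinj)
  have hrev : (fun p => p - q 0) =O[𝓝 (q 0)] fun p => g p - g (q 0) := by
    have hbound : (fun p => p - q 0) =O[𝓝 (q 0)] fun p => g' (p - q 0) :=
      isBigO_iff.mpr ⟨C, Eventually.of_forall fun p => ZeroHomClass.bound_of_antilipschitz _ hC _⟩
    have hequiv : (fun p => g p - g (q 0)) ~[𝓝 (q 0)] fun p => g' (p - q 0) :=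
      hg.isLittleO.trans_isBigO hbound
    exact hbound.trans hequiv.isBigO_symm
  have hlin : (fun h => q h - q 0) =O[𝓝 0] fun h : 𝕜 => h := by
    simpa [Function.comp_def] using (hrev.comp_tendsto hq).trans hgq.isBigO_sub
  have herr : (fun h => g (q h) - g (q 0) - g' (q h - q 0)) =o[𝓝 0] fun h : 𝕜 => h :=
    (hg.isLittleO.comp_tendsto hq).trans_isBigO hlin
  have hslope : Tendsto (fun h : 𝕜 => h⁻¹ • (g (q h) - g (q 0))) (𝓝[≠] 0) (𝓝 v) := by
    have := hasDerivAt_iff_tendsto_slope.mp hgq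
    convert this using 2 with h
    simp [slope_def_module]
  have hlim : Tendsto (fun h : 𝕜 => g' (h⁻¹ • (q h - q 0))) (𝓝[≠] 0) (𝓝 v) := by
    have := hslope.sub ((herr.tendsto_inv_smul_nhds_zero).mono_left nhdsWithin_le_nhds)
    simpa [smul_sub] using this
  exact (LinearMap.range (g' : F →ₗ[𝕜] E)).closed_of_finiteDimensional.mem_of_tendsto hlim
    (Eventually.of_forall fun h => ⟨_, rfl⟩)

variable {N : Type*} [TopologicalSpace N] [ChartedSpace F N] {f : N → E} {f' : F →L[𝕜] E}

theorem HasMFDerivAt.hasFDerivAt_comp_extChartAt_symm {x : N}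
    (hf : HasMFDerivAt 𝓘(𝕜, F) 𝓘(𝕜, E) f x f') :
    HasFDerivAt (f ∘ (extChartAt 𝓘(𝕜, F) x).symm) f' (extChartAt 𝓘(𝕜, F) x x) := by
  have h := hf.2
  rw [writtenInExtChartAt, extChartAt_model_space_eq_id, PartialEquiv.refl_coe,
    Function.id_comp, modelWithCornersSelf_coe, range_id] at h
  exact hasFDerivWithinAt_univ.mp h

theorem HasMFDerivAt.mem_range_of_hasDerivAt_comp [CompleteSpace 𝕜] [FiniteDimensional 𝕜 F]
    {x : N} {γ : 𝕜 → N} {v : E} (hf : HasMFDerivAt 𝓘(𝕜, F) 𝓘(𝕜, E) f x f')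
    (hinj : Function.Injective f') (hγ0 : γ 0 = x) (hγ : ContinuousAt γ 0)
    (hv : HasDerivAt (f ∘ γ) v 0) : v ∈ Set.range f' := by
  subst hγ0
  set e := extChartAt 𝓘(𝕜, F) (γ 0)
  have hsource : ∀ᶠ h in 𝓝 0, γ h ∈ e.source :=
    hγ.preimage_mem_nhds (extChartAt_source_mem_nhds (γ 0))
  refine hf.hasFDerivAt_comp_extChartAt_symm.mem_range_of_hasDerivAt_comp hinj
    ((continuousAt_extChartAt (γ 0)).comp hγ) (hv.congr_of_eventuallyEq ?_)
  filter_upwards [hsource] with h hh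
  change f (e.symm (e (γ h))) = f (γ h)
  rw [e.left_inv hh]

theorem HasMFDerivAt.exists_hasDerivAt_comp {x : N}
    (hf : HasMFDerivAt 𝓘(𝕜, F) 𝓘(𝕜, E) f x f') (u : F) :
    ∃ γ : 𝕜 → N, γ 0 = x ∧ HasDerivAt (f ∘ γ) (f' u) 0 := by
  set e := extChartAt 𝓘(𝕜, F) x
  refine ⟨fun h => e.symm (e x + h • u), by simp [e], ?_⟩
  have hline : HasDerivAt (fun h : 𝕜 => e x + h • u) u 0 := by
    simpa using ((hasDerivAt_id (0 : 𝕜)).smul_const u).const_add (e x)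
  exact hf.hasFDerivAt_comp_extChartAt_symm.comp_hasDerivAt_of_eq 0 hline (by simp [e])
end Immersion

section Nagumo
variable {E : Type*} [NormedAddCommGroup E] [NormedSpace ℝ E] {M : Set E} {V : E → E} {K : ℝ≥0}

theorem IsCompact.frequently_slope_infDist_lt (hM : IsCompact M) (hne : M.Nonempty)
    (hV : LipschitzWith K V)
    (htan : ∀ x ∈ M, ∃ γ : ℝ → E, γ 0 = x ∧ (∀ᶠ h in 𝓝[>] 0, γ h ∈ M) ∧
      HasDerivWithinAt γ (V x) (Ici 0) 0)
    {c : ℝ → E} {s r : ℝ} (hc : HasDerivWithinAt c (V (c s)) (Ici s) s)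
    (hr : K * infDist (c s) M < r) :
    ∃ᶠ z in 𝓝[>] s, (z - s)⁻¹ * (infDist (c z) M - infDist (c s) M) < r := by
  obtain ⟨x, hxM, hx⟩ := hM.exists_infDist_eq_dist hne (c s)
  obtain ⟨γ, hγ0, hγM, hγ⟩ := htan x hxM
  have hshift : HasDerivWithinAt (fun z => γ (z - s)) (V x) (Ici s) s := by
    have hγ' : HasDerivWithinAt γ (V x) (Ici 0) (s - s) := by rwa [sub_self]
    simpa [Function.comp_def] using hγ'.scomp (h := fun z => z - s) (s := Ici s) s
      ((hasDerivAt_id s).sub_const s).hasDerivWithinAt fun z (hz : s ≤ z) => sub_nonneg.mpr hz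
  have hnorm : ‖V (c s) - V x‖ < r := by
    rw [← dist_eq_norm]
    exact (hV.dist_le_mul (c s) x).trans_lt (hx ▸ hr)
  have hsub : Tendsto (fun z => z - s) (𝓝[>] s) (𝓝[>] 0) :=
    tendsto_nhdsWithin_of_tendsto_nhds_of_eventually_within _
      (((continuous_sub_right s).tendsto' s 0 (sub_self s)).mono_left nhdsWithin_le_nhds)
      (eventually_nhdsWithin_of_forall fun z (hz : s < z) => sub_pos.mpr hz)
  refine ((hc.sub hshift).liminf_right_slope_norm_le hnorm).mp ?_
  filter_upwards [hsub.eventually hγM, self_mem_nhdsWithin] with z hzM hz hlt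
  have hφs : ‖c s - γ (s - s)‖ = infDist (c s) M := by rw [sub_self, hγ0, hx, dist_eq_norm]
  simp only [Pi.sub_apply, hφs] at hlt
  refine lt_of_le_of_lt ?_ hlt
  gcongr
  · exact inv_nonneg.mpr (sub_nonneg.mpr (le_of_lt hz))
  · rw [← dist_eq_norm]
    exact infDist_le_dist_of_mem hzM

theorem IsCompact.mapsTo_of_tangent_of_hasDerivWithinAt (hM : IsCompact M) (hV : LipschitzWith K V)
    (htan : ∀ x ∈ M, ∃ γ : ℝ → E, γ 0 = x ∧ (∀ᶠ h in 𝓝[>] 0, γ h ∈ M) ∧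
      HasDerivWithinAt γ (V x) (Ici 0) 0)
    {c : ℝ → E} {a b : ℝ} (hcont : ContinuousOn c (Icc a b))
    (hc : ∀ s ∈ Ico a b, HasDerivWithinAt c (V (c s)) (Ici s) s) (ha : c a ∈ M) :
    MapsTo c (Icc a b) M := by
  intro t ht
  have hgron := le_gronwallBound_of_liminf_deriv_right_le (f := fun s => infDist (c s) M)
    (f' := fun s => K * infDist (c s) M) (δ := 0) (ε := 0)
    ((continuous_infDist_pt M).comp_continuousOn hcont)
    (fun s hs r hr => hM.frequently_slope_infDist_lt ⟨_, ha⟩ hV htan (hc s hs) hr)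
    (infDist_zero_of_mem ha).le (fun s _ => (add_zero _).ge) t ht
  rw [gronwallBound_ε0, zero_mul] at hgron
  exact (hM.isClosed.mem_iff_infDist_zero ⟨_, ha⟩).mpr (le_antisymm hgron infDist_nonneg)
end Nagumo

open scoped Matrix.Norms.L2Operator in
theorem Matrix.coe_toEuclideanLin_exp {𝕜 ι : Type*} [RCLike 𝕜] [Fintype ι] [DecidableEq ι]
    (A : Matrix ι ι 𝕜) :
    ⇑(Matrix.toEuclideanLin (exp A)) = ⇑(exp (Matrix.toEuclideanCLM (𝕜 := 𝕜) A)) := by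
  let := NormedAlgebra.restrictScalars ℚ 𝕜 (Matrix ι ι 𝕜)
  have hcont : Continuous (Matrix.toEuclideanCLM (𝕜 := 𝕜) (n := ι)) :=
    (Matrix.toEuclideanCLM (𝕜 := 𝕜) (n := ι)).toAlgEquiv.toLinearMap.continuous_of_finiteDimensional
  rw [← map_exp _ hcont]
  rfl

section Flow
variable {E : Type*} [NormedAddCommGroup E] [NormedSpace ℝ E] {M : Set E}

theorem exp_zero_smul_apply (L : E →L[ℝ] E) (y : E) : exp ((0 : ℝ) • L) y = y := by
  simp

variable [CompleteSpace E]

theorem hasDerivAt_exp_smul_apply (L : E →L[ℝ] E) (y : E) (s : ℝ) :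
    HasDerivAt (fun t : ℝ => exp (t • L) y) (L (exp (s • L) y)) s :=
  (ContinuousLinearMap.apply ℝ E y).hasFDerivAt.comp_hasDerivAt s (hasDerivAt_exp_smul_const' L s)

theorem continuous_exp_smul_apply (L : E →L[ℝ] E) (y : E) :
    Continuous fun t : ℝ => exp (t • L) y :=
  continuous_iff_continuousAt.mpr fun s => (hasDerivAt_exp_smul_apply L y s).continuousAt

theorem exp_smul_apply_exp_neg_smul_apply (L : E →L[ℝ] E) (t : ℝ) (y : E) :
    exp (t • L) (exp (-t • L) y) = y := by
  let := NormedAlgebra.restrictScalars ℚ ℝ (E →L[ℝ] E)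
  change (exp (t • L) * exp (-t • L)) y = y
  rw [← exp_add_of_commute ((Commute.refl L).smul_left t |>.smul_right _),
    ← add_smul, add_neg_cancel, zero_smul, exp_zero, one_apply_eq_self]

theorem IsCompact.mapsTo_exp_smul (hM : IsCompact M) {L : E →L[ℝ] E}
    (htan : ∀ x ∈ M, ∃ γ : ℝ → E, γ 0 = x ∧ (∀ᶠ h in 𝓝[>] 0, γ h ∈ M) ∧
      HasDerivWithinAt γ (L x) (Ici 0) 0)
    {t : ℝ} (ht : 0 ≤ t) : MapsTo ⇑(exp (t • L)) M M := fun y hy =>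
  hM.mapsTo_of_tangent_of_hasDerivWithinAt L.lipschitz htan
    (continuous_exp_smul_apply L y).continuousOn
    (fun s _ => (hasDerivAt_exp_smul_apply L y s).hasDerivWithinAt)
    ((exp_zero_smul_apply L y).symm ▸ hy) ⟨ht, le_rfl⟩

theorem IsCompact.image_exp_smul_eq (hM : IsCompact M) {L : E →L[ℝ] E}
    (htan : ∀ x ∈ M, ∃ γ : ℝ → E, γ 0 = x ∧ (∀ᶠ h in 𝓝 0, γ h ∈ M) ∧ HasDerivAt γ (L x) 0)
    (t : ℝ) : ⇑(exp (t • L)) '' M = M := by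
  have hmaps : ∀ t : ℝ, MapsTo ⇑(exp (t • L)) M M := by
    intro t
    rcases le_total 0 t with ht | ht
    · refine hM.mapsTo_exp_smul (fun x hx => ?_) ht
      obtain ⟨γ, hγ0, hγM, hγ⟩ := htan x hx
      exact ⟨γ, hγ0, hγM.filter_mono nhdsWithin_le_nhds, hγ.hasDerivWithinAt⟩
    · rw [← neg_smul_neg]
      refine hM.mapsTo_exp_smul (fun x hx => ?_) (neg_nonneg.mpr ht)
      obtain ⟨γ, hγ0, hγM, hγ⟩ := htan x hx
      have hγ' : HasDerivAt γ (L x) (-0) := by rwa [neg_zero]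
      refine ⟨fun h => γ (-h), by simpa using hγ0, ?_, ?_⟩
      · exact ((continuous_neg.tendsto' 0 0 neg_zero).eventually hγM).filter_mono
          nhdsWithin_le_nhds
      · simpa [Function.comp_def] using
          (hγ'.scomp 0 (hasDerivAt_neg 0)).hasDerivWithinAt (s := Ici 0)
  exact (hmaps t).image_subset.antisymm fun y hy =>
    ⟨_, hmaps (-t) hy, exp_smul_apply_exp_neg_smul_apply L t y⟩
end Flow

theorem stmt16_general {n d : ℕ} (M : Set (EuclideanSpace ℝ (Fin n)))
    (hMcpt : IsCompact M)
    [ChartedSpace (EuclideanSpace ℝ (Fin d)) M]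
    (hsmooth : ContMDiff (𝓡 d) 𝓘(ℝ, EuclideanSpace ℝ (Fin n)) 2
      ((↑) : M → EuclideanSpace ℝ (Fin n)))
    (himm : ∀ x : M, Function.Injective
      (mfderiv (𝓡 d) 𝓘(ℝ, EuclideanSpace ℝ (Fin n))
        ((↑) : M → EuclideanSpace ℝ (Fin n)) x))
    (A : Matrix (Fin n) (Fin n) ℝ) :
    (∀ t : ℝ, (⇑(Matrix.toEuclideanLin (NormedSpace.exp (t • A)))) '' M = M) ↔
      ∀ x : M, Matrix.toEuclideanLin A (x : EuclideanSpace ℝ (Fin n)) ∈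
        Set.range (mfderiv (𝓡 d) 𝓘(ℝ, EuclideanSpace ℝ (Fin n))
          ((↑) : M → EuclideanSpace ℝ (Fin n)) x) := by
  set L := Matrix.toEuclideanCLM (𝕜 := ℝ) A
  have hexp (t : ℝ) : ⇑(Matrix.toEuclideanLin (exp (t • A))) = ⇑(exp (t • L)) := by
    rw [Matrix.coe_toEuclideanLin_exp, map_smul]
  have hderiv (x : M) := ((hsmooth x).mdifferentiableAt two_ne_zero).hasMFDerivAt
  constructor
  · intro hinv x
    have hflow (h : ℝ) : exp (h • L) (x : EuclideanSpace ℝ (Fin n)) ∈ M :=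
      (hinv h).subset ⟨x, x.2, congrFun (hexp h) x⟩
    have hv : HasDerivAt (fun h : ℝ => exp (h • L) (x : EuclideanSpace ℝ (Fin n))) (L x) 0 := by
      simpa only [exp_zero_smul_apply] using hasDerivAt_exp_smul_apply L x 0
    exact (hderiv x).mem_range_of_hasDerivAt_comp (γ := fun h => (⟨_, hflow h⟩ : M)) (himm x)
      (Subtype.ext (exp_zero_smul_apply L x))
      ((continuous_exp_smul_apply L x).subtype_mk hflow).continuousAt hv
  · intro htan t
    rw [hexp t]
    refine hMcpt.image_exp_smul_eq (fun y hy => ?_) t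
    obtain ⟨u, hu⟩ := htan ⟨y, hy⟩
    obtain ⟨γ, hγ0, hγ⟩ := (hderiv ⟨y, hy⟩).exists_hasDerivAt_comp u
    exact ⟨fun h => γ h, by simp [hγ0], Eventually.of_forall fun h => (γ h).2, hu ▸ hγ⟩

theorem stmt16 {n d : ℕ} (M : Set (EuclideanSpace ℝ (Fin n)))
    (hMne : M.Nonempty) (hMcpt : IsCompact M)
    [ChartedSpace (EuclideanSpace ℝ (Fin d)) M]
    [IsManifold (𝓡 d) (⊤ : ℕ∞) M]
    (hsmooth : ContMDiff (𝓡 d) 𝓘(ℝ, EuclideanSpace ℝ (Fin n)) 2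
      ((↑) : M → EuclideanSpace ℝ (Fin n)))
    (himm : ∀ x : M, Function.Injective
      (mfderiv (𝓡 d) 𝓘(ℝ, EuclideanSpace ℝ (Fin n))
        ((↑) : M → EuclideanSpace ℝ (Fin n)) x))
    (A : Matrix (Fin n) (Fin n) ℝ) :
    (∀ t : ℝ, (⇑(Matrix.toEuclideanLin (NormedSpace.exp (t • A)))) '' M = M) ↔
      ∀ x : M, Matrix.toEuclideanLin A (x : EuclideanSpace ℝ (Fin n)) ∈
        Set.range (mfderiv (𝓡 d) 𝓘(ℝ, EuclideanSpace ℝ (Fin n))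
          ((↑) : M → EuclideanSpace ℝ (Fin n)) x) :=
  stmt16_general M hMcpt hsmooth himm A
end
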